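/- arXiv:dg-ga/9712003 — 3 statements merged into one kernel-verified Lean document; each statement's English description precedes it below -/
import Mathlib

section
/- Let A be a 2n×2n real symplectic matrix (A ∈ Sp(2n)), regarded as a complex matrix, let λ ∈ ℂ with |λ| = 1 be an eigenvalue of A that is a simple root of the characteristic polynomial of A, and let v ∈ ℂ^{2n} be a nonzero vector with A v = λ v. Then β(v, v) is a nonzero real number. -/
/-!
Since `J` is real with `Jᵀ = -J`, the number `β(v, v) = -i v̄ᵀ J v` is its own conjugate. As `A`
is real, `v̄` is an eigenvector of `A` for `λ̄ = λ⁻¹`, and the symplectic relation `Aᵀ J A = J`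
turns it into the eigenvector `w = J v̄` of `Aᵀ` for `λ`. For a simple eigenvalue a left
eigenvector `w` and a right eigenvector `v` cannot be orthogonal, and `wᵀ v = i β(v, v)`.
-/

open Matrix

/-- The Hermitian form `β(v, w) = -i (w̄)ᵀ J v` on `ℂ^{2n}`. -/
noncomputable def betaForm (n : ℕ) (v w : (Fin n ⊕ Fin n) → ℂ) : ℂ :=
  -Complex.I * (star w ⬝ᵥ (Matrix.J (Fin n) ℂ *ᵥ v))

open Polynomial ComplexConjugate

namespace Matrix

variable {m : Type*} [Fintype m] [DecidableEq m]

theorem transpose_aeval {R : Type*} [CommSemiring R] (M : Matrix m m R) (p : R[X]) :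
    (aeval M p)ᵀ = aeval Mᵀ p := by
  induction p using Polynomial.induction_on' with
  | add p q hp hq => rw [map_add, transpose_add, hp, hq, map_add]
  | monomial k a => simp [aeval_monomial, Algebra.algebraMap_eq_smul_one, transpose_pow]

theorem aeval_mulVec_of_mulVec_eq_smul {R : Type*} [CommRing R] {M : Matrix m m R} {μ : R}
    {u : m → R} (h : M *ᵥ u = μ • u) (p : R[X]) : aeval M p *ᵥ u = p.eval μ • u :=
  calc aeval M p *ᵥ u = toLinAlgEquiv' (aeval M p) u := (toLinAlgEquiv'_apply ..).symm
    _ = aeval (toLinAlgEquiv' M) p u := by rw [aeval_algHom_apply]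
    _ = p.eval μ • u :=
      Module.End.aeval_apply_of_mem_apply_eq_smul (by rwa [toLinAlgEquiv'_apply])

theorem exists_eq_smul_of_rootMultiplicity_charpoly_eq_one {K : Type*} [Field K]
    {M : Matrix m m K} {μ : K} (hμ : M.charpoly.rootMultiplicity μ = 1)
    {v : m → K} (hv₀ : v ≠ 0) (hv : M *ᵥ v = μ • v) {u : m → K} (hu : M *ᵥ u = μ • u) :
    ∃ c : K, u = c • v := by
  set E := Module.End.eigenspace (toLin' M) μ
  have hle : Submodule.span K {v} ≤ E := by
    rw [Submodule.span_le, Set.singleton_subset_iff, SetLike.mem_coe,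
      Module.End.mem_eigenspace_iff, toLin'_apply, hv]
  have hspan : Submodule.span K {v} = E := by
    refine Submodule.eq_of_le_of_finrank_le hle ?_
    rw [finrank_span_singleton hv₀, ← hμ, ← charpoly_toLin']
    exact LinearMap.finrank_eigenspace_le _ μ
  have huE : u ∈ E := by rwa [Module.End.mem_eigenspace_iff, toLin'_apply]
  obtain ⟨c, hc⟩ := Submodule.mem_span_singleton.mp (hspan ▸ huE)
  exact ⟨c, hc.symm⟩

theorem dotProduct_ne_zero_of_rootMultiplicity_charpoly_eq_one {K : Type*} [Field K]
    {M : Matrix m m K} {μ : K} (hμ : M.charpoly.rootMultiplicity μ = 1)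
    {v : m → K} (hv₀ : v ≠ 0) (hv : M *ᵥ v = μ • v)
    {w : m → K} (hw₀ : w ≠ 0) (hw : Mᵀ *ᵥ w = μ • w) :
    w ⬝ᵥ v ≠ 0 := by
  intro hwv
  set q := M.charpoly /ₘ (X - C μ)
  have hq : (X - C μ) * q = M.charpoly := by
    simpa [hμ] using pow_mul_divByMonic_rootMultiplicity_eq M.charpoly μ
  have hqμ : q.eval μ ≠ 0 := by
    simpa [hμ] using eval_divByMonic_pow_rootMultiplicity_ne_zero μ M.charpoly_monic.ne_zero
  -- `q(M)` maps everything into the `μ`-eigenspace, which is the line through `v`.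
  have hrange : ∀ x, M *ᵥ (aeval M q *ᵥ x) = μ • (aeval M q *ᵥ x) := by
    intro x
    have h := congrArg (· *ᵥ x) (aeval_self_charpoly M)
    simp only [← hq, map_mul, map_sub, aeval_X, aeval_C, ← mulVec_mulVec, sub_mulVec,
      zero_mulVec, sub_eq_zero] at h
    simpa [Algebra.algebraMap_eq_smul_one, smul_mulVec] using h
  refine hw₀ (dotProduct_eq_zero w fun x => ?_)
  obtain ⟨c, hc⟩ := exists_eq_smul_of_rootMultiplicity_charpoly_eq_one hμ hv₀ hv (hrange x)
  have : q.eval μ * (w ⬝ᵥ x) = c * (w ⬝ᵥ v) := by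
    rw [← smul_eq_mul, ← smul_dotProduct, ← aeval_mulVec_of_mulVec_eq_smul hw, ← transpose_aeval,
      mulVec_transpose, ← dotProduct_mulVec, hc, dotProduct_smul, smul_eq_mul]
  simpa [hwv, hqμ] using this

section Symplectic

variable {l : Type*} [Fintype l] [DecidableEq l]

theorem J_mulVec_ne_zero {R : Type*} [CommRing R] {x : l ⊕ l → R} (hx : x ≠ 0) :
    J l R *ᵥ x ≠ 0 := by
  intro h
  have h' := congrArg (J l R *ᵥ ·) h
  simp only [mulVec_mulVec, J_squared, neg_mulVec, one_mulVec, mulVec_zero, neg_eq_zero] at h'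
  exact hx h'

theorem J_mulVec_dotProduct {R : Type*} [CommRing R] (x y : l ⊕ l → R) :
    (J l R *ᵥ x) ⬝ᵥ y = -(x ⬝ᵥ (J l R *ᵥ y)) := by
  rw [dotProduct_comm, dotProduct_mulVec, ← mulVec_transpose, J_transpose, neg_mulVec,
    neg_dotProduct, dotProduct_comm]

theorem transpose_mulVec_J_mulVec_of_mulVec_eq_smul {R : Type*} [CommRing R]
    {B : Matrix (l ⊕ l) (l ⊕ l) R} (hB : Bᵀ * J l R * B = J l R) {x : l ⊕ l → R} {μ ν : R}
    (hx : B *ᵥ x = ν • x) (hμν : μ * ν = 1) :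
    Bᵀ *ᵥ (J l R *ᵥ x) = μ • (J l R *ᵥ x) := by
  have h := congrArg (· *ᵥ x) hB
  simp only [← mulVec_mulVec, hx, mulVec_smul] at h
  calc Bᵀ *ᵥ (J l R *ᵥ x) = μ • ν • (Bᵀ *ᵥ (J l R *ᵥ x)) := by rw [smul_smul, hμν, one_smul]
    _ = μ • (J l R *ᵥ x) := by rw [h]

end Symplectic

theorem map_ofReal_mulVec_star {ι κ : Type*} [Fintype κ] (A : Matrix ι κ ℝ) (x : κ → ℂ) :
    A.map Complex.ofReal *ᵥ star x = star (A.map Complex.ofReal *ᵥ x) := by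
  ext i
  simp [mulVec, dotProduct, Complex.conj_ofReal]

theorem star_J_mulVec {l : Type*} [Fintype l] [DecidableEq l] (x : l ⊕ l → ℂ) :
    star (J l ℂ *ᵥ x) = J l ℂ *ᵥ star x := by
  rw [← map_J l Complex.ofRealHom]
  exact (map_ofReal_mulVec_star _ x).symm

end Matrix

theorem betaForm_self_eq (n : ℕ) (v : Fin n ⊕ Fin n → ℂ) :
    betaForm n v v = Complex.I * ((J (Fin n) ℂ *ᵥ star v) ⬝ᵥ v) := by
  rw [betaForm, J_mulVec_dotProduct]
  ring

theorem conj_betaForm_self (n : ℕ) (v : Fin n ⊕ Fin n → ℂ) :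
    conj (betaForm n v v) = betaForm n v v := by
  conv_lhs => rw [betaForm]
  rw [map_mul, map_neg, Complex.conj_I, neg_neg, ← Complex.star_def, ← star_dotProduct,
    star_J_mulVec, betaForm_self_eq]

/-- If `A ∈ Sp(2n)` has a simple eigenvalue `λ ∈ S¹` with eigenvector `v`, then
`β(v, v)` is a nonzero real number. -/
theorem stmt0 (n : ℕ) (A : Matrix (Fin n ⊕ Fin n) (Fin n ⊕ Fin n) ℝ)
    (hA : Aᵀ * Matrix.J (Fin n) ℝ * A = Matrix.J (Fin n) ℝ)
    (lam : ℂ) (hlam : ‖lam‖ = 1)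
    (hsimple : ((A.map (Complex.ofReal)).charpoly).rootMultiplicity lam = 1)
    (v : (Fin n ⊕ Fin n) → ℂ) (hv : v ≠ 0)
    (heig : (A.map (Complex.ofReal)) *ᵥ v = lam • v) :
    ∃ r : ℝ, r ≠ 0 ∧ betaForm n v v = (r : ℂ) := by
  have hB : (A.map Complex.ofReal)ᵀ * J (Fin n) ℂ * A.map Complex.ofReal = J (Fin n) ℂ := by
    have h := congrArg (·.map Complex.ofRealHom) hA
    simp only [Matrix.map_mul, transpose_map, map_J] at h
    exact h
  have hconj : A.map Complex.ofReal *ᵥ star v = conj lam • star v := by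
    rw [map_ofReal_mulVec_star, heig, star_smul, Complex.star_def]
  have hunit : lam * conj lam = 1 := by
    rw [Complex.mul_conj, Complex.normSq_eq_norm_sq, hlam, one_pow, Complex.ofReal_one]
  have hleft := transpose_mulVec_J_mulVec_of_mulVec_eq_smul hB hconj hunit
  have hβ : betaForm n v v ≠ 0 := by
    rw [betaForm_self_eq]
    exact mul_ne_zero Complex.I_ne_zero <| dotProduct_ne_zero_of_rootMultiplicity_charpoly_eq_one
      hsimple hv heig (J_mulVec_ne_zero (star_ne_zero.mpr hv)) hleft
  have hreal := Complex.conj_eq_iff_re.mp (conj_betaForm_self n v)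
  exact ⟨(betaForm n v v).re, fun h => hβ (by rw [← hreal, h, Complex.ofReal_zero]), hreal.symm⟩
end

section
/- Let B : [0,1] → Sp(2n) be a piecewise positive path, i.e. B is continuous and there is a partition 0 = t₀ < t₁ < ⋯ < t_N = 1 such that the restriction of B to each subinterval [t_{i−1}, t_i] is a positive path. Then for every ε > 0 there exists a positive path A : [0,1] → Sp(2n) with ‖A(t) − B(t)‖ < ε for all t ∈ [0,1]; i.e. any piecewise positive path may be C⁰-approximated by a positive path. -/
/-!
Reparametrize `B` by a monotone `C¹` map `φ` that fixes every break point `τ i`, is flat there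
(`φ' (τ i) = 0`) and moves no point by more than `δ`: from the identity subtract, around each
break point `c`, the bump `δ b ((s - c) / δ)` with `b x = x (1 - x²)₊²`. Then `B ∘ φ` is
differentiable on all of `[0, 1]` (with derivative `0` at the break points) and its generator
`φ' P` is only positive semidefinite. Multiplying by `R (η t) = exp (η t J)`, which is symplectic
and commutes with `J`, turns the generator into `η + R (φ' P) Rᵀ`, which is positive definite.
For small `δ` and `η` the resulting path is uniformly close to `B`.
-/

open Matrix Set

attribute [local instance] Matrix.normedAddCommGroup Matrix.normedSpace

/-- A positive path in `Sp(2n)` on the parameter set `s`: a differentiable path of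
symplectic matrices whose derivative at each time `t ∈ s` is `J Pₜ A(t)` for some
symmetric positive definite `Pₜ`. -/
def IsPosPath (n : ℕ) (s : Set ℝ) (A : ℝ → Matrix (Fin n ⊕ Fin n) (Fin n ⊕ Fin n) ℝ) : Prop :=
  ∀ t ∈ s, (A t)ᵀ * Matrix.J (Fin n) ℝ * A t = Matrix.J (Fin n) ℝ ∧
    ∃ P : Matrix (Fin n ⊕ Fin n) (Fin n ⊕ Fin n) ℝ, P.IsSymm ∧ P.PosDef ∧
      HasDerivWithinAt A (Matrix.J (Fin n) ℝ * P * A t) s t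

open Filter Topology Metric

theorem hasDerivWithinAt_iUnion {𝕜 E ι : Type*} [NontriviallyNormedField 𝕜]
    [NormedAddCommGroup E] [NormedSpace 𝕜 E] [Finite ι] {f : 𝕜 → E} {f' : E} {s : ι → Set 𝕜}
    {x : 𝕜} (h : ∀ i, HasDerivWithinAt f f' (s i) x) :
    HasDerivWithinAt f f' (⋃ i, s i) x := by
  simp only [hasDerivWithinAt_iff_tendsto_slope, iUnion_sdiff, nhdsWithin_iUnion,
    tendsto_iSup] at *
  exact h

theorem hasDerivAt_max_zero_sq (x : ℝ) :
    HasDerivAt (fun x : ℝ => max 0 x ^ 2) (2 * max 0 x) x := by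
  refine hasDerivAt_of_hasDerivAt_of_ne' (f := fun x : ℝ => max 0 x ^ 2)
    (g := fun x => 2 * max 0 x) (x := 0) (fun y hy => ?_) (by fun_prop) (by fun_prop) x
  rcases hy.lt_or_gt with hy | hy
  · have hzero : (fun x : ℝ => max 0 x ^ 2) =ᶠ[𝓝 y] fun _ => 0 := by
      filter_upwards [Iio_mem_nhds hy] with z hz
      simp [max_eq_left hz.out.le]
    simpa [max_eq_left hy.le] using (hasDerivAt_const y (0 : ℝ)).congr_of_eventuallyEq hzero
  · have hsq : (fun x : ℝ => max 0 x ^ 2) =ᶠ[𝓝 y] fun x => x ^ 2 := by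
      filter_upwards [Ioi_mem_nhds hy] with z hz
      simp [max_eq_right hz.out.le]
    simpa [max_eq_right hy.le] using (hasDerivAt_pow 2 y).congr_of_eventuallyEq hsq

noncomputable def matrixMulCLM (l m o : Type*) [Fintype l] [Fintype m] [Fintype o] :
    Matrix l m ℝ →L[ℝ] Matrix m o ℝ →L[ℝ] Matrix l o ℝ :=
  LinearMap.toContinuousLinearMap
    (LinearMap.toContinuousLinearMap.toLinearMap ∘ₗ
      LinearMap.mk₂ ℝ (· * ·) Matrix.add_mul Matrix.smul_mul Matrix.mul_add
        fun c X Y => Matrix.mul_smul X c Y)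

theorem HasDerivWithinAt.matrix_mul {l m o : Type*} [Fintype l] [Fintype m] [Fintype o]
    {u : ℝ → Matrix l m ℝ} {v : ℝ → Matrix m o ℝ} {u' : Matrix l m ℝ} {v' : Matrix m o ℝ}
    {s : Set ℝ} {x : ℝ} (hu : HasDerivWithinAt u u' s x) (hv : HasDerivWithinAt v v' s x) :
    HasDerivWithinAt (fun t => u t * v t) (u x * v' + u' * v x) s x :=
  (matrixMulCLM l m o).hasDerivWithinAt_of_bilinear hu hv

theorem Matrix.exists_norm_mul_le (l m o : Type*) [Fintype l] [Fintype m] [Fintype o] :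
    ∃ K, ∀ (X : Matrix l m ℝ) (Y : Matrix m o ℝ), ‖X * Y‖ ≤ K * ‖X‖ * ‖Y‖ :=
  ⟨_, (matrixMulCLM l m o).le_opNorm₂⟩

theorem Finset.eventually_pairwiseDisjoint_ball {X : Type*} [MetricSpace X]
    (S : Finset X) : ∀ᶠ δ in 𝓝 (0 : ℝ), (S : Set X).PairwiseDisjoint (ball · δ) := by
  have h : ∀ c ∈ S, ∀ c' ∈ S, ∀ᶠ δ in 𝓝 (0 : ℝ), c ≠ c' → Disjoint (ball c δ) (ball c' δ) := by
    intro c _ c' _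
    rcases eq_or_ne c c' with rfl | hne
    · simp
    filter_upwards [eventually_lt_nhds (half_pos (dist_pos.2 hne))] with δ hδ _
    exact ball_disjoint_ball (by linarith)
  simpa [Set.PairwiseDisjoint, Set.Pairwise, Function.onFun] using h

theorem Icc_subset_iUnion_Icc_castSucc_succ {α : Type*} [LinearOrder α] {N : ℕ} (hN : 0 < N)
    {τ : Fin (N + 1) → α} (hτ : Monotone τ) :
    Icc (τ 0) (τ (Fin.last N)) ⊆ ⋃ i : Fin N, Icc (τ i.castSucc) (τ i.succ) := by
  obtain ⟨M, rfl⟩ := Nat.exists_eq_add_one_of_ne_zero hN.ne'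
  intro x hx
  suffices h : ∀ i : Fin (M + 2), τ i ≤ x →
      x ∈ ⋃ i : Fin (M + 1), Icc (τ i.castSucc) (τ i.succ) from h 0 hx.1
  intro i
  induction i using Fin.reverseInduction with
  | last =>
    intro hlast
    refine mem_iUnion.2 ⟨Fin.last M, ?_, ?_⟩
    · exact (hτ (Fin.le_last _)).trans hlast
    · rw [Fin.succ_last]; exact hx.2
  | cast i ih =>
    intro hi
    by_cases hx' : x ≤ τ i.succ
    · exact mem_iUnion.2 ⟨i, hi, hx'⟩
    · exact ih (not_le.1 hx').le

noncomputable def bumpProfile (x : ℝ) : ℝ := x * max 0 (1 - x ^ 2) ^ 2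

noncomputable def bumpProfile' (x : ℝ) : ℝ :=
  max 0 (1 - x ^ 2) ^ 2 - 4 * x ^ 2 * max 0 (1 - x ^ 2)

theorem hasDerivAt_bumpProfile (x : ℝ) : HasDerivAt bumpProfile (bumpProfile' x) x := by
  have hw : HasDerivAt (fun x : ℝ => 1 - x ^ 2) (-(2 * x)) x := by
    simpa using (hasDerivAt_pow 2 x).const_sub 1
  exact ((hasDerivAt_id' x).mul ((hasDerivAt_max_zero_sq _).comp x hw)).congr_deriv
    (by simp only [bumpProfile', Function.comp_apply]; ring)

theorem bumpProfile_zero : bumpProfile 0 = 0 := by simp [bumpProfile]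

theorem bumpProfile'_zero : bumpProfile' 0 = 1 := by norm_num [bumpProfile']

theorem max_zero_one_sub_sq_eq_zero {x : ℝ} (hx : 1 ≤ |x|) : max 0 (1 - x ^ 2) = 0 := by
  have : 1 ≤ x ^ 2 := by nlinarith [sq_abs x]
  exact max_eq_left (by linarith)

theorem bumpProfile_eq_zero {x : ℝ} (hx : 1 ≤ |x|) : bumpProfile x = 0 := by
  simp [bumpProfile, max_zero_one_sub_sq_eq_zero hx]

theorem bumpProfile'_eq_zero {x : ℝ} (hx : 1 ≤ |x|) : bumpProfile' x = 0 := by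
  simp [bumpProfile', max_zero_one_sub_sq_eq_zero hx]

theorem bumpProfile'_le_one (x : ℝ) : bumpProfile' x ≤ 1 := by
  have h₀ : 0 ≤ max 0 (1 - x ^ 2) := le_max_left _ _
  have h₁ : max 0 (1 - x ^ 2) ≤ 1 := max_le zero_le_one (by nlinarith)
  unfold bumpProfile'
  nlinarith [mul_nonneg (sq_nonneg x) h₀]

theorem abs_bumpProfile_le_one (x : ℝ) : |bumpProfile x| ≤ 1 := by
  rcases le_or_gt 1 |x| with hx | hx
  · simp [bumpProfile_eq_zero hx]
  · have h₀ : 0 ≤ max 0 (1 - x ^ 2) := le_max_left _ _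
    have h₁ : max 0 (1 - x ^ 2) ≤ 1 := max_le zero_le_one (by nlinarith)
    rw [bumpProfile, abs_mul, abs_pow, abs_of_nonneg h₀]
    exact mul_le_one₀ hx.le (by positivity) (pow_le_one₀ h₀ h₁)

section Separated

variable {M : Type*} [AddCommMonoid M] {f : ℝ → M} {S : Finset ℝ} {δ s : ℝ}

theorem one_le_abs_sub_div_of_notMem_ball (hδ : 0 < δ) {c : ℝ} (hs : s ∉ ball c δ) :
    1 ≤ |(s - c) / δ| := by
  rwa [mem_ball, Real.dist_eq, not_lt, ← one_le_div hδ, ← abs_of_pos hδ, ← abs_div] at hs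

theorem Finset.sum_comp_sub_div_eq_of_mem_ball (hf : ∀ x, 1 ≤ |x| → f x = 0)
    (hS : (S : Set ℝ).PairwiseDisjoint (ball · δ)) (hδ : 0 < δ) {c₀ : ℝ} (hc₀ : c₀ ∈ S)
    (hs : s ∈ ball c₀ δ) : ∑ c ∈ S, f ((s - c) / δ) = f ((s - c₀) / δ) := by
  refine Finset.sum_eq_single_of_mem c₀ hc₀ fun c hc hne => hf _ ?_
  exact one_le_abs_sub_div_of_notMem_ball hδ fun h => hne (hS.elim_set hc hc₀ s h hs)

theorem Finset.exists_sum_comp_sub_div_eq (hf : ∀ x, 1 ≤ |x| → f x = 0)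
    (hS : (S : Set ℝ).PairwiseDisjoint (ball · δ)) (hδ : 0 < δ) (s : ℝ) :
    ∃ x, ∑ c ∈ S, f ((s - c) / δ) = f x := by
  by_cases hnear : ∃ c ∈ S, s ∈ ball c δ
  · obtain ⟨c, hc, hs⟩ := hnear
    exact ⟨_, S.sum_comp_sub_div_eq_of_mem_ball hf hS hδ hc hs⟩
  · refine ⟨1, ?_⟩
    push Not at hnear
    rw [hf 1 (by simp)]
    exact Finset.sum_eq_zero fun c hc => hf _ (one_le_abs_sub_div_of_notMem_ball hδ (hnear c hc))

end Separated

noncomputable def reparam (δ : ℝ) (S : Finset ℝ) (s : ℝ) : ℝ :=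
  s - δ * ∑ c ∈ S, bumpProfile ((s - c) / δ)

noncomputable def reparam' (δ : ℝ) (S : Finset ℝ) (s : ℝ) : ℝ :=
  1 - ∑ c ∈ S, bumpProfile' ((s - c) / δ)

section Reparam

variable {S : Finset ℝ} {δ : ℝ}

theorem hasDerivAt_reparam (hδ : δ ≠ 0) (s : ℝ) :
    HasDerivAt (reparam δ S) (reparam' δ S s) s := by
  have hbump : ∀ c ∈ S, HasDerivAt (fun s => bumpProfile ((s - c) / δ))
      (bumpProfile' ((s - c) / δ) * (1 / δ)) s := fun c _ =>
    (hasDerivAt_bumpProfile _).comp s (((hasDerivAt_id' s).sub_const c).div_const δ)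
  refine ((hasDerivAt_id' s).sub ((HasDerivAt.fun_sum hbump).const_mul δ)).congr_deriv ?_
  rw [reparam', Finset.mul_sum]
  congr 1
  refine Finset.sum_congr rfl fun c _ => ?_
  field_simp

theorem reparam'_nonneg (hS : (S : Set ℝ).PairwiseDisjoint (ball · δ)) (hδ : 0 < δ) (s : ℝ) :
    0 ≤ reparam' δ S s := by
  obtain ⟨x, hx⟩ := S.exists_sum_comp_sub_div_eq (fun _ => bumpProfile'_eq_zero) hS hδ s
  rw [reparam', hx, sub_nonneg]
  exact bumpProfile'_le_one x

theorem reparam_of_mem (hS : (S : Set ℝ).PairwiseDisjoint (ball · δ)) (hδ : 0 < δ) {c : ℝ}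
    (hc : c ∈ S) : reparam δ S c = c := by
  rw [reparam, S.sum_comp_sub_div_eq_of_mem_ball (fun _ => bumpProfile_eq_zero) hS hδ hc
    (mem_ball_self hδ), sub_self, zero_div, bumpProfile_zero, mul_zero, sub_zero]

theorem reparam'_of_mem (hS : (S : Set ℝ).PairwiseDisjoint (ball · δ)) (hδ : 0 < δ) {c : ℝ}
    (hc : c ∈ S) : reparam' δ S c = 0 := by
  rw [reparam', S.sum_comp_sub_div_eq_of_mem_ball (fun _ => bumpProfile'_eq_zero) hS hδ hc
    (mem_ball_self hδ), sub_self, zero_div, bumpProfile'_zero, sub_self]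

theorem abs_reparam_sub_le (hS : (S : Set ℝ).PairwiseDisjoint (ball · δ)) (hδ : 0 < δ) (s : ℝ) :
    |reparam δ S s - s| ≤ δ := by
  obtain ⟨x, hx⟩ := S.exists_sum_comp_sub_div_eq (fun _ => bumpProfile_eq_zero) hS hδ s
  rw [reparam, hx, sub_sub_cancel_left, abs_neg, abs_mul, abs_of_pos hδ]
  exact mul_le_of_le_one_right hδ.le (abs_bumpProfile_le_one x)

theorem exists_flat_reparam {ι : Type*} [Finite ι] (τ : ι → ℝ) {ε : ℝ} (hε : 0 < ε) :
    ∃ φ φ' : ℝ → ℝ, (∀ s, HasDerivAt φ (φ' s) s) ∧ (∀ s, 0 ≤ φ' s) ∧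
      (∀ i, φ (τ i) = τ i) ∧ (∀ i, φ' (τ i) = 0) ∧ ∀ s, |φ s - s| < ε := by
  set S := (Set.finite_range τ).toFinset
  have hτS (i : ι) : τ i ∈ S := (Set.finite_range τ).mem_toFinset.2 (mem_range_self i)
  have hδ_ev : ∀ᶠ δ in 𝓝[>] (0 : ℝ),
      ((S : Set ℝ).PairwiseDisjoint (ball · δ) ∧ δ < ε) ∧ 0 < δ :=
    ((S.eventually_pairwiseDisjoint_ball.and (eventually_lt_nhds hε)).filter_mono
      nhdsWithin_le_nhds).and self_mem_nhdsWithin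
  obtain ⟨δ, ⟨hS, hδε⟩, hδ⟩ := hδ_ev.exists
  exact ⟨reparam δ S, reparam' δ S, hasDerivAt_reparam hδ.ne', reparam'_nonneg hS hδ,
    fun i => reparam_of_mem hS hδ (hτS i), fun i => reparam'_of_mem hS hδ (hτS i),
    fun s => (abs_reparam_sub_le hS hδ s).trans_lt hδε⟩

end Reparam

noncomputable def rotJ (l : Type*) [Fintype l] [DecidableEq l] (θ : ℝ) :
    Matrix (l ⊕ l) (l ⊕ l) ℝ :=
  Real.cos θ • 1 + Real.sin θ • J l ℝ

section RotJ

variable {l : Type*} [Fintype l] [DecidableEq l]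

theorem rotJ_zero : rotJ l 0 = 1 := by simp [rotJ]

theorem rotJ_add (θ ψ : ℝ) : rotJ l θ * rotJ l ψ = rotJ l (θ + ψ) := by
  simp only [rotJ, Real.cos_add, Real.sin_add, Matrix.add_mul, Matrix.mul_add, Matrix.smul_mul,
    Matrix.mul_smul, Matrix.one_mul, Matrix.mul_one, J_squared, smul_neg]
  module

theorem transpose_rotJ (θ : ℝ) : (rotJ l θ)ᵀ = rotJ l (-θ) := by
  simp [rotJ, J_transpose]

theorem commute_J_rotJ (θ : ℝ) : Commute (J l ℝ) (rotJ l θ) :=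
  ((Commute.one_right _).smul_right _).add_right ((Commute.refl _).smul_right _)

theorem rotJ_mem_symplecticGroup (θ : ℝ) : rotJ l θ ∈ symplecticGroup l ℝ := by
  rw [SymplecticGroup.mem_iff', Matrix.mul_assoc, (commute_J_rotJ θ).eq, ← Matrix.mul_assoc,
    transpose_rotJ, rotJ_add, neg_add_cancel, rotJ_zero, Matrix.one_mul]

theorem hasDerivAt_rotJ (θ : ℝ) : HasDerivAt (rotJ l) (J l ℝ * rotJ l θ) θ := by
  have h := ((Real.hasDerivAt_cos θ).smul_const (1 : Matrix (l ⊕ l) (l ⊕ l) ℝ)).add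
    ((Real.hasDerivAt_sin θ).smul_const (J l ℝ))
  refine h.congr_deriv ?_
  simp only [rotJ, Matrix.mul_add, Matrix.mul_smul, Matrix.mul_one, J_squared, smul_neg, neg_smul]
  abel

theorem exists_norm_rotJ_mul_sub_lt (C : ℝ) {ε : ℝ} (hε : 0 < ε) :
    ∃ η > 0, ∀ θ, |θ| ≤ η → ∀ M : Matrix (l ⊕ l) (l ⊕ l) ℝ, ‖M‖ ≤ C →
      ‖rotJ l θ * M - M‖ < ε := by
  obtain ⟨K, hK⟩ := Matrix.exists_norm_mul_le (l ⊕ l) (l ⊕ l) (l ⊕ l)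
  have hcont : Continuous fun θ => |K| * ‖rotJ l θ - 1‖ * |C| := by
    have : Continuous (rotJ l) :=
      continuous_iff_continuousAt.2 fun θ => (hasDerivAt_rotJ θ).continuousAt
    fun_prop
  have hsmall : ∀ᶠ θ in 𝓝 0, |K| * ‖rotJ l θ - 1‖ * |C| < ε :=
    hcont.continuousAt.eventually_lt continuousAt_const (by simpa [rotJ_zero] using hε)
  obtain ⟨r, hr, hball⟩ := Metric.eventually_nhds_iff.1 hsmall
  refine ⟨r / 2, half_pos hr, fun θ hθ M hM => ?_⟩
  calc ‖rotJ l θ * M - M‖ = ‖(rotJ l θ - 1) * M‖ := by rw [Matrix.sub_mul, Matrix.one_mul]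
    _ ≤ K * ‖rotJ l θ - 1‖ * ‖M‖ := hK _ _
    _ ≤ |K| * ‖rotJ l θ - 1‖ * |C| := by
      gcongr
      exacts [le_abs_self K, hM.trans (le_abs_self C)]
    _ < ε := hball (by rw [Real.dist_eq, sub_zero]; linarith)

end RotJ

def IsNonnegPath (n : ℕ) (s : Set ℝ) (G : ℝ → Matrix (Fin n ⊕ Fin n) (Fin n ⊕ Fin n) ℝ) :
    Prop :=
  ∀ t ∈ s, (G t)ᵀ * J (Fin n) ℝ * G t = J (Fin n) ℝ ∧
    ∃ Q : Matrix (Fin n ⊕ Fin n) (Fin n ⊕ Fin n) ℝ, Q.PosSemidef ∧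
      HasDerivWithinAt G (J (Fin n) ℝ * Q * G t) s t

section Paths

variable {n : ℕ} {s : Set ℝ}

theorem IsNonnegPath.isPosPath_rotJ_mul {G : ℝ → Matrix (Fin n ⊕ Fin n) (Fin n ⊕ Fin n) ℝ}
    (hG : IsNonnegPath n s G) {η : ℝ} (hη : 0 < η) :
    IsPosPath n s (fun u => rotJ (Fin n) (η * u) * G u) := by
  intro t ht
  obtain ⟨hsymp, Q, hQ, hderiv⟩ := hG t ht
  set R := rotJ (Fin n) (η * t) with hR_def
  have hPd : (η • 1 + R * Q * Rᵀ).PosDef :=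
    (PosDef.one.smul hη).add_posSemidef (by simpa using hQ.mul_mul_conjTranspose_same R)
  refine ⟨?_, _, isHermitian_iff_isSymm.1 hPd.isHermitian, hPd, ?_⟩
  · rw [← SymplecticGroup.mem_iff'] at hsymp ⊢
    exact mul_mem (rotJ_mem_symplecticGroup _) hsymp
  have hR : HasDerivWithinAt (fun u => rotJ (Fin n) (η * u)) (η • (J (Fin n) ℝ * R)) s t := by
    have h := (hasDerivAt_rotJ (l := Fin n) (η * t)).scomp t ((hasDerivAt_id t).const_mul η)
    rw [mul_one] at h
    exact h.hasDerivWithinAt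
  have hRR (X : Matrix (Fin n ⊕ Fin n) (Fin n ⊕ Fin n) ℝ) : Rᵀ * (R * X) = X := by
    rw [← Matrix.mul_assoc, transpose_rotJ, rotJ_add, neg_add_cancel, rotJ_zero, Matrix.one_mul]
  have hJR (X : Matrix (Fin n ⊕ Fin n) (Fin n ⊕ Fin n) ℝ) :
      J (Fin n) ℝ * (R * X) = R * (J (Fin n) ℝ * X) := by
    rw [← Matrix.mul_assoc, (commute_J_rotJ _).eq, Matrix.mul_assoc]
  refine (hR.matrix_mul hderiv).congr_deriv ?_
  simp only [← hR_def, Matrix.add_mul, Matrix.mul_add, Matrix.smul_mul, Matrix.mul_smul,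
    Matrix.one_mul, Matrix.mul_assoc, hRR, hJR]
  abel

theorem IsPosPath.hasDerivWithinAt_comp {s' : Set ℝ}
    {B : ℝ → Matrix (Fin n ⊕ Fin n) (Fin n ⊕ Fin n) ℝ} (hB : IsPosPath n s B) {φ : ℝ → ℝ}
    {φ' t : ℝ} (hφ : HasDerivWithinAt φ φ' s' t) (hmaps : MapsTo φ s' s) (ht : t ∈ s') :
    ∃ P : Matrix (Fin n ⊕ Fin n) (Fin n ⊕ Fin n) ℝ, P.PosDef ∧
      HasDerivWithinAt (B ∘ φ) (φ' • (J (Fin n) ℝ * P * B (φ t))) s' t := by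
  obtain ⟨-, P, -, hP, hBderiv⟩ := hB (φ t) (hmaps ht)
  exact ⟨P, hP, hBderiv.scomp t hφ hmaps⟩

theorem isNonnegPath_comp_of_piecewise {N : ℕ} (hN : 0 < N) {τ : Fin (N + 1) → ℝ}
    (hτ : Monotone τ) {B : ℝ → Matrix (Fin n ⊕ Fin n) (Fin n ⊕ Fin n) ℝ}
    (hB : ∀ i : Fin N, IsPosPath n (Icc (τ i.castSucc) (τ i.succ)) B) {φ φ' : ℝ → ℝ}
    (hφ : ∀ s, HasDerivAt φ (φ' s) s) (hφ'_nonneg : ∀ s, 0 ≤ φ' s)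
    (hφ_fix : ∀ i, φ (τ i) = τ i) (hφ'_fix : ∀ i, φ' (τ i) = 0) :
    IsNonnegPath n (Icc (τ 0) (τ (Fin.last N))) (B ∘ φ) := by
  have hmono : Monotone φ := monotone_of_hasDerivAt_nonneg hφ hφ'_nonneg
  have hmaps (i : Fin N) :
      MapsTo φ (Icc (τ i.castSucc) (τ i.succ)) (Icc (τ i.castSucc) (τ i.succ)) := by
    simpa only [hφ_fix] using hmono.mapsTo_Icc (a := τ i.castSucc) (b := τ i.succ)
  have hcover := Icc_subset_iUnion_Icc_castSucc_succ hN hτ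
  intro t ht
  obtain ⟨i, hi⟩ := mem_iUnion.1 (hcover ht)
  refine ⟨(hB i _ (hmaps i hi)).1, ?_⟩
  by_cases hgrid : t ∈ range τ
  · obtain ⟨k, rfl⟩ := hgrid
    refine ⟨0, .zero, ?_⟩
    rw [Matrix.mul_zero, Matrix.zero_mul]
    refine (hasDerivWithinAt_iUnion fun j => ?_).mono hcover
    by_cases hj : τ k ∈ Icc (τ j.castSucc) (τ j.succ)
    · obtain ⟨P, -, hP⟩ := (hB j).hasDerivWithinAt_comp (hφ _).hasDerivWithinAt (hmaps j) hj
      rwa [hφ'_fix, zero_smul] at hP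
    · exact HasFDerivWithinAt.of_notMem_closure (by rwa [isClosed_Icc.closure_eq])
  · have hnhds : Icc (τ i.castSucc) (τ i.succ) ∈ 𝓝 t :=
      Icc_mem_nhds (hi.1.lt_of_ne fun h => hgrid ⟨_, h⟩)
        (hi.2.lt_of_ne fun h => hgrid ⟨_, h.symm⟩)
    obtain ⟨P, hP, hderiv⟩ := (hB i).hasDerivWithinAt_comp (hφ t).hasDerivWithinAt (hmaps i) hi
    refine ⟨φ' t • P, hP.posSemidef.smul (hφ'_nonneg t), ?_⟩
    rw [Matrix.mul_smul, Matrix.smul_mul]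
    exact (hderiv.hasDerivAt hnhds).hasDerivWithinAt

end Paths

/-- Any piecewise positive path may be `C⁰`-approximated by a positive path. -/
theorem stmt3 (n : ℕ) (B : ℝ → Matrix (Fin n ⊕ Fin n) (Fin n ⊕ Fin n) ℝ)
    (hBcont : ContinuousOn B (Icc (0 : ℝ) 1))
    (N : ℕ) (hN : 0 < N) (τ : Fin (N + 1) → ℝ)
    (hτ0 : τ 0 = 0) (hτN : τ (Fin.last N) = 1) (hτmono : StrictMono τ)
    (hpiece : ∀ i : Fin N, IsPosPath n (Icc (τ i.castSucc) (τ i.succ)) B) :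
    ∀ ε > (0 : ℝ), ∃ A : ℝ → Matrix (Fin n ⊕ Fin n) (Fin n ⊕ Fin n) ℝ,
      IsPosPath n (Icc (0 : ℝ) 1) A ∧ ∀ t ∈ Icc (0 : ℝ) 1, ‖A t - B t‖ < ε := by
  intro ε hε
  obtain ⟨C, hC⟩ := isCompact_Icc.exists_bound_of_continuousOn hBcont
  obtain ⟨δ, hδ, hBδ⟩ := Metric.uniformContinuousOn_iff.1
    (isCompact_Icc.uniformContinuousOn_of_continuous hBcont) (ε / 2) (half_pos hε)
  obtain ⟨η, hη, hrot⟩ := exists_norm_rotJ_mul_sub_lt (l := Fin n) C (half_pos hε)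
  obtain ⟨φ, φ', hφ, hφ'_nonneg, hφ_fix, hφ'_fix, hφ_close⟩ := exists_flat_reparam τ hδ
  have hA := (isNonnegPath_comp_of_piecewise hN hτmono.monotone hpiece hφ hφ'_nonneg hφ_fix
    hφ'_fix).isPosPath_rotJ_mul hη
  rw [hτ0, hτN] at hA
  have hφI : MapsTo φ (Icc 0 1) (Icc 0 1) := by
    simpa only [← hτ0, ← hτN, hφ_fix] using
      (monotone_of_hasDerivAt_nonneg hφ hφ'_nonneg).mapsTo_Icc (a := τ 0) (b := τ (Fin.last N))
  refine ⟨_, hA, fun t ht => ?_⟩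
  have hηt : |η * t| ≤ η := by
    rw [abs_mul, abs_of_pos hη, abs_of_nonneg ht.1]
    exact mul_le_of_le_one_right hη.le ht.2
  calc ‖rotJ (Fin n) (η * t) * B (φ t) - B t‖
      ≤ ‖rotJ (Fin n) (η * t) * B (φ t) - B (φ t)‖ + ‖B (φ t) - B t‖ :=
        norm_sub_le_norm_sub_add_norm_sub _ _ _
    _ < ε / 2 + ε / 2 :=
      add_lt_add (hrot _ hηt _ (hC _ (hφI ht)))
        (dist_eq_norm (B (φ t)) (B t) ▸ hBδ _ (hφI ht) _ ht (hφ_close t))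
    _ = ε := add_halves ε
end

section
/- Let α, β ∈ ℝ with α > 1, β > 1 and α ≠ β. Then there exists a positive path A : [0,1] → Sp(2) such that trace(A(t)) > 2 for all t ∈ [0,1] (so each A(t) has two distinct real positive eigenvalues), the function t ↦ trace(A(t)) is strictly monotone, A(0) has eigenvalues {α, 1/α}, and A(1) has eigenvalues {β, 1/β}. -/
/-
A path in `SL(2, ℝ) = Sp(2)` is positive exactly when its generator `P = -J A' A⁻¹` is positive
definite. Along
  `A t = !![τ t - 1, (τ t - 2) e^{-L t}; e^{L t}, 1]`
the determinant is `1` and the trace is `τ t`, while the generator has corner entry `L e^{L t}`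
and determinant `L (L (τ t - 2) - τ' t)`. So as long as the trace stays above `2`, a fast enough
exponential twist `L` absorbs any prescribed trace velocity `τ'`. Letting `τ` run affinely from
`α + α⁻¹` to `β + β⁻¹` (distinct numbers above `2`, as `x ↦ x + x⁻¹` is strictly increasing on
`[1, ∞)`) gives the path.
-/

open Matrix Set

attribute [local instance] Matrix.normedAddCommGroup Matrix.normedSpace

/-- The standard complex structure on `ℝ²`. -/
def J2 : Matrix (Fin 2) (Fin 2) ℝ := !![0, -1; 1, 0]

/-- A positive path in `Sp(2)` on the parameter set `s`. -/
def IsPosPath2 (s : Set ℝ) (A : ℝ → Matrix (Fin 2) (Fin 2) ℝ) : Prop :=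
  ∀ t ∈ s, (A t)ᵀ * J2 * A t = J2 ∧
    ∃ P : Matrix (Fin 2) (Fin 2) ℝ, P.IsSymm ∧ P.PosDef ∧
      HasDerivWithinAt A (J2 * P * A t) s t

theorem Matrix.posDef_fin_two_of {p q r : ℝ} (hp : 0 < p) (hdet : q * q < p * r) :
    (!![p, q; q, r]).PosDef := by
  refine posDef_iff_dotProduct_mulVec.2 ⟨?_, fun x hx => ?_⟩
  · ext i j
    fin_cases i <;> fin_cases j <;> rfl
  · have hquad : star x ⬝ᵥ (!![p, q; q, r] *ᵥ x) =
        p * x 0 ^ 2 + 2 * q * x 0 * x 1 + r * x 1 ^ 2 := by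
      rw [star_trivial, vec2_dotProduct]
      simp only [mulVec, dotProduct, Fin.sum_univ_two, of_apply, cons_val_zero, cons_val_one]
      ring
    have hsq : p * (p * x 0 ^ 2 + 2 * q * x 0 * x 1 + r * x 1 ^ 2) =
        (p * x 0 + q * x 1) ^ 2 + (p * r - q * q) * x 1 ^ 2 := by ring
    rw [hquad, ← mul_pos_iff_of_pos_left hp, hsq]
    by_cases h1 : x 1 = 0
    · have h0 : x 0 ≠ 0 := fun h0 => hx (by ext i; fin_cases i <;> simp [h0, h1])
      simpa [h1] using sq_pos_iff.2 (mul_ne_zero hp.ne' h0)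
    · have := sub_pos.2 hdet
      positivity

theorem transpose_mul_J2_mul_self (A : Matrix (Fin 2) (Fin 2) ℝ) :
    Aᵀ * J2 * A = A.det • J2 := by
  ext i j
  fin_cases i <;> fin_cases j <;> simp [J2, mul_apply, Fin.sum_univ_two, det_fin_two] <;> ring

theorem J2_mul_J2 : J2 * J2 = -1 := by
  ext i j
  fin_cases i <;> fin_cases j <;> simp [J2]

theorem isPosPath2_of_posDef {s : Set ℝ} {A A' : ℝ → Matrix (Fin 2) (Fin 2) ℝ}
    (hdet : ∀ t ∈ s, (A t).det = 1) (hA : ∀ t ∈ s, HasDerivWithinAt A (A' t) s t)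
    (hP : ∀ t ∈ s, (-(J2 * A' t * adjugate (A t))).PosDef) : IsPosPath2 s A := by
  intro t ht
  refine ⟨by rw [transpose_mul_J2_mul_self, hdet t ht, one_smul], _,
    isHermitian_iff_isSymm.1 (hP t ht).isHermitian, hP t ht, ?_⟩
  have hJA : J2 * -(J2 * A' t * adjugate (A t)) * A t = A' t := by
    simp only [mul_neg, neg_mul, ← mul_assoc, J2_mul_J2, neg_neg, one_mul]
    rw [mul_assoc, adjugate_mul, hdet t ht, one_smul, mul_one]
  rw [hJA]
  exact hA t ht

section TracePath

variable (τ τ' : ℝ → ℝ) (L : ℝ)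

noncomputable def tracePath (t : ℝ) : Matrix (Fin 2) (Fin 2) ℝ :=
  !![τ t - 1, (τ t - 2) * Real.exp (-(L * t)); Real.exp (L * t), 1]

noncomputable def tracePathDeriv (t : ℝ) : Matrix (Fin 2) (Fin 2) ℝ :=
  !![τ' t, (τ' t - L * (τ t - 2)) * Real.exp (-(L * t)); L * Real.exp (L * t), 0]

theorem trace_tracePath (t : ℝ) : (tracePath τ L t).trace = τ t := by
  simp [tracePath, trace_fin_two_of]

theorem det_tracePath (t : ℝ) : (tracePath τ L t).det = 1 := by
  simp only [tracePath, det_fin_two_of, Real.exp_neg]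
  field_simp
  ring

variable {τ τ'} in
theorem hasDerivAt_tracePath {t : ℝ} (hτ : HasDerivAt τ (τ' t) t) :
    HasDerivAt (tracePath τ L) (tracePathDeriv τ τ' L t) t := by
  have hexp : HasDerivAt (fun t => Real.exp (L * t)) (L * Real.exp (L * t)) t := by
    simpa [mul_comm] using ((hasDerivAt_id t).const_mul L).exp
  have hexp_neg : HasDerivAt (fun t => Real.exp (-(L * t))) (-L * Real.exp (-(L * t))) t := by
    simpa [mul_comm] using ((hasDerivAt_id t).const_mul L).neg.exp
  refine hasDerivAt_pi.2 fun i => hasDerivAt_pi.2 fun j => ?_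
  fin_cases i <;> fin_cases j
  · simpa [tracePath, tracePathDeriv] using hτ.sub_const 1
  · refine ((hτ.sub_const 2).mul hexp_neg).congr_deriv ?_
    simp only [tracePathDeriv, Fin.zero_eta, Fin.mk_one, of_apply, cons_val_one, cons_val_zero]
    ring
  · simpa [tracePath, tracePathDeriv] using hexp
  · simpa [tracePath, tracePathDeriv] using hasDerivAt_const t (1 : ℝ)

variable {L} in
theorem posDef_neg_J2_mul_tracePathDeriv_mul_adjugate {t : ℝ} (hL : 0 < L)
    (hτ' : τ' t < L * (τ t - 2)) :
    (-(J2 * tracePathDeriv τ τ' L t * adjugate (tracePath τ L t))).PosDef := by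
  set e := Real.exp (L * t)
  have he : 0 < e := Real.exp_pos _
  have hP : -(J2 * tracePathDeriv τ τ' L t * adjugate (tracePath τ L t)) =
      !![L * e, -(L * (τ t - 2));
        -(L * (τ t - 2)), (L * (τ t - 1) * (τ t - 2) - τ' t) / e] := by
    ext i j
    fin_cases i <;> fin_cases j <;>
      simp [J2, tracePath, tracePathDeriv, adjugate_fin_two_of, Real.exp_neg, e]
    field_simp
    ring
  rw [hP]
  refine posDef_fin_two_of (by positivity) ?_
  rw [mul_div_assoc', mul_div_right_comm, mul_div_cancel_right₀ _ he.ne']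
  nlinarith [mul_pos hL (sub_pos.2 hτ')]

end TracePath

theorem isPosPath2_tracePath {s : Set ℝ} {τ τ' : ℝ → ℝ} {L : ℝ} (hL : 0 < L)
    (hτ : ∀ t ∈ s, HasDerivAt τ (τ' t) t) (hτ' : ∀ t ∈ s, τ' t < L * (τ t - 2)) :
    IsPosPath2 s (tracePath τ L) :=
  isPosPath2_of_posDef (fun t _ => det_tracePath τ L t)
    (fun t ht => (hasDerivAt_tracePath L (hτ t ht)).hasDerivWithinAt)
    (fun t ht => posDef_neg_J2_mul_tracePathDeriv_mul_adjugate τ τ' hL (hτ' t ht))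

theorem min_le_add_mul_sub (a b : ℝ) {t : ℝ} (ht : t ∈ Icc (0 : ℝ) 1) :
    min a b ≤ a + t * (b - a) := by
  nlinarith [min_le_left a b, min_le_right a b, ht.1, ht.2]

theorem exists_isPosPath2_trace_eq {T₀ T₁ : ℝ} (hT₀ : 2 < T₀) (hT₁ : 2 < T₁) :
    ∃ A : ℝ → Matrix (Fin 2) (Fin 2) ℝ, IsPosPath2 (Icc (0 : ℝ) 1) A ∧
      ∀ t, (A t).trace = T₀ + t * (T₁ - T₀) := by
  set m := min T₀ T₁ - 2
  have hm : 0 < m := sub_pos.2 (lt_min hT₀ hT₁)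
  set L := (|T₁ - T₀| + 1) / m
  have hτ (t : ℝ) : HasDerivAt (fun t => T₀ + t * (T₁ - T₀)) (T₁ - T₀) t := by
    simpa using ((hasDerivAt_id t).mul_const (T₁ - T₀)).const_add T₀
  refine ⟨tracePath (fun t => T₀ + t * (T₁ - T₀)) L,
    isPosPath2_tracePath (by positivity) (fun t _ => hτ t) (fun t ht => ?_),
    trace_tracePath _ L⟩
  calc T₁ - T₀ < |T₁ - T₀| + 1 := by linarith [le_abs_self (T₁ - T₀)]
    _ = L * m := (div_mul_cancel₀ _ hm.ne').symm
    _ ≤ L * (T₀ + t * (T₁ - T₀) - 2) := by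
      gcongr
      linarith [min_le_add_mul_sub T₀ T₁ ht]

theorem strictMonoOn_add_inv : StrictMonoOn (fun x : ℝ => x + x⁻¹) (Ici 1) := by
  intro x hx y hy hxy
  have hx0 : 0 < x := zero_lt_one.trans_le hx
  have hinv : x⁻¹ - y⁻¹ < y - x := by
    rw [inv_sub_inv hx0.ne' (hx0.trans hxy).ne']
    exact div_lt_self (sub_pos.2 hxy) (one_lt_mul_of_le_of_lt hx (lt_of_le_of_lt hx hxy))
  dsimp only
  linarith

/-- For `α, β > 1` with `α ≠ β` there is a positive path in `Sp(2)` with trace `> 2`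
throughout, strictly monotone trace, starting with spectrum `{α, 1/α}` and ending with
spectrum `{β, 1/β}`. -/
theorem stmt4 (α β : ℝ) (hα : 1 < α) (hβ : 1 < β) (hab : α ≠ β) :
    ∃ A : ℝ → Matrix (Fin 2) (Fin 2) ℝ, IsPosPath2 (Icc (0 : ℝ) 1) A ∧
      (∀ t ∈ Icc (0 : ℝ) 1, 2 < (A t).trace) ∧
      (StrictMonoOn (fun t => (A t).trace) (Icc (0 : ℝ) 1) ∨
        StrictAntiOn (fun t => (A t).trace) (Icc (0 : ℝ) 1)) ∧
      (A 0).trace = α + α⁻¹ ∧ (A 1).trace = β + β⁻¹ := by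
  have h2 : (2 : ℝ) = 1 + 1⁻¹ := by norm_num
  have hα2 : 2 < α + α⁻¹ := h2 ▸ strictMonoOn_add_inv self_mem_Ici hα.le hα
  have hβ2 : 2 < β + β⁻¹ := h2 ▸ strictMonoOn_add_inv self_mem_Ici hβ.le hβ
  have hne : α + α⁻¹ ≠ β + β⁻¹ := strictMonoOn_add_inv.injOn.ne hα.le hβ.le hab
  obtain ⟨A, hA, htr⟩ := exists_isPosPath2_trace_eq hα2 hβ2
  refine ⟨A, hA, fun t ht => ?_, ?_, by simp [htr], by simp [htr]⟩
  · rw [htr]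
    linarith [min_le_add_mul_sub (α + α⁻¹) (β + β⁻¹) ht, lt_min hα2 hβ2]
  · simp only [htr]
    rcases hne.lt_or_gt with h | h
    · exact .inl (((strictMono_mul_right_of_pos (sub_pos.2 h)).const_add _).strictMonoOn _)
    · exact .inr (((strictAnti_mul_right (sub_neg.2 h)).const_add _).strictAntiOn _)
end
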